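/- arXiv:1908.04024 — 3 statements merged into one kernel-verified Lean document; each statement's English description precedes it below -/
import Mathlib

section
/- For a finite set X, a probability distribution P on X, and a function f : X → ℝ, the minimum over all probability distributions Q on X of D(Q‖P) + E_Q[f] equals -log(E_P[exp(-f)]), where D(Q‖P) = Σ_x Q(x) log(Q(x)/P(x)) is the Kullback–Leibler divergence. -/
/-!
Let `Z = E_P[exp (-f)]` and let `G = P exp (-f) / Z` be the Gibbs distribution. For every
distribution `Q`, `D(Q‖P) + E_Q[f] = D(Q‖G) - log Z`, and `D(Q‖G) ≥ 0` with equality at `Q = G`.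
-/

open Real Finset

theorem sub_le_mul_log_div {q r : ℝ} (hq : 0 ≤ q) (hr : 0 < r) : q - r ≤ q * log (q / r) := by
  have h := mul_le_mul_of_nonneg_left (self_sub_one_le_mul_log (div_nonneg hq hr.le)) hr.le
  calc q - r = r * (q / r - 1) := by field_simp
    _ ≤ r * (q / r * log (q / r)) := h
    _ = q * log (q / r) := by field_simp

theorem sum_sub_sum_le_sum_mul_log_div {ι : Type*} (s : Finset ι) {Q R : ι → ℝ}
    (hQ : ∀ i ∈ s, 0 ≤ Q i) (hR : ∀ i ∈ s, 0 < R i) :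
    ∑ i ∈ s, Q i - ∑ i ∈ s, R i ≤ ∑ i ∈ s, Q i * log (Q i / R i) := by
  rw [← sum_sub_distrib]
  exact sum_le_sum fun i hi => sub_le_mul_log_div (hQ i hi) (hR i hi)

theorem mul_log_div_mul_exp_div {q p a z : ℝ} (hp : 0 < p) (hz : 0 < z) :
    q * log (q / (p * exp (-a) / z)) = q * log (q / p) + q * a + q * log z := by
  rcases eq_or_ne q 0 with rfl | hq
  · simp
  have hw : p * exp (-a) ≠ 0 := by positivity
  rw [log_div hq (by positivity), log_div hw hz.ne', log_mul hp.ne' (exp_ne_zero _), log_exp,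
    log_div hq hp.ne']
  ring

section Gibbs

variable {X : Type*} [Fintype X]

noncomputable def gibbsDist (P f : X → ℝ) (x : X) : ℝ :=
  P x * exp (-f x) / ∑ y, P y * exp (-f y)

variable [Nonempty X] {P : X → ℝ} (f : X → ℝ)

theorem sum_mul_exp_neg_pos (hP : ∀ x, 0 < P x) : 0 < ∑ x, P x * exp (-f x) :=
  sum_pos (fun x _ => by have := hP x; positivity) univ_nonempty

theorem gibbsDist_pos (hP : ∀ x, 0 < P x) (x : X) : 0 < gibbsDist P f x := by
  have := hP x
  have := sum_mul_exp_neg_pos f hP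
  unfold gibbsDist
  positivity

theorem sum_gibbsDist (hP : ∀ x, 0 < P x) : ∑ x, gibbsDist P f x = 1 := by
  unfold gibbsDist
  rw [← sum_div, div_self (sum_mul_exp_neg_pos f hP).ne']

theorem sum_mul_log_div_add_sum_mul_eq (hP : ∀ x, 0 < P x) {Q : X → ℝ} (hQ : ∑ x, Q x = 1) :
    ∑ x, Q x * log (Q x / P x) + ∑ x, Q x * f x =
      ∑ x, Q x * log (Q x / gibbsDist P f x) - log (∑ x, P x * exp (-f x)) := by
  simp only [gibbsDist, mul_log_div_mul_exp_div (hP _) (sum_mul_exp_neg_pos f hP),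
    sum_add_distrib, ← sum_mul, hQ, one_mul]
  ring

end Gibbs

theorem gibbs_variational_formula_general {X : Type*} [Fintype X] [Nonempty X]
    (P : X → ℝ) (hPpos : ∀ x, 0 < P x) (f : X → ℝ) :
    IsLeast
      {v : ℝ | ∃ Q : X → ℝ, (∀ x, 0 ≤ Q x) ∧ (∑ x, Q x = 1) ∧
        v = (∑ x, Q x * Real.log (Q x / P x)) + ∑ x, Q x * f x}
      (-Real.log (∑ x, P x * Real.exp (-f x))) := by
  have hG := sum_gibbsDist f hPpos
  refine ⟨⟨gibbsDist P f, fun x => (gibbsDist_pos f hPpos x).le, hG, ?_⟩, ?_⟩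
  · simp [sum_mul_log_div_add_sum_mul_eq f hPpos hG, div_self (gibbsDist_pos f hPpos _).ne']
  · rintro v ⟨Q, hQ, hQ1, rfl⟩
    have hGibbs := sum_sub_sum_le_sum_mul_log_div univ (fun x _ => hQ x)
      (fun x _ => gibbsDist_pos f hPpos x)
    rw [sum_mul_log_div_add_sum_mul_eq f hPpos hQ1]
    linarith

/-- Gibbs variational formula: the minimum over probability mass functions `Q` on a
nonempty finite set `X` of `D(Q‖P) + E_Q[f]` is `-log E_P[exp(-f)]`. -/
theorem gibbs_variational_formula {X : Type*} [Fintype X] [Nonempty X]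
    (P : X → ℝ) (hPpos : ∀ x, 0 < P x) (hPsum : ∑ x, P x = 1) (f : X → ℝ) :
    IsLeast
      {v : ℝ | ∃ Q : X → ℝ, (∀ x, 0 ≤ Q x) ∧ (∑ x, Q x = 1) ∧
        v = (∑ x, Q x * Real.log (Q x / P x)) + ∑ x, Q x * f x}
      (-Real.log (∑ x, P x * Real.exp (-f x))) :=
  gibbs_variational_formula_general P hPpos f
end

section
/- For a strictly positive probability mass function P on a finite set X and positive weights w : X → ℝ, the function λ ↦ λ · log(Σ_x P(x) · w(x)^{1/λ}) is convex on (0, ∞). -/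
/-!
The map `t ↦ log ∑ₓ P x * w x ^ t` is convex: each summand is log-affine in `t`, and Hölder's
inequality with exponents `1/a`, `1/b` shows that a sum of log-convex functions is log-convex.
The function of the theorem is the perspective `λ ↦ λ g(1/λ)` of this convex `g`, and perspectives
of convex functions are convex: with `λ = a λ₁ + b λ₂`, the point `1/λ` is the convex combination
of `1/λ₁`, `1/λ₂` with weights `a λ₁ / λ`, `b λ₂ / λ`.
-/

open Real Finset

theorem Real.sum_rpow_mul_rpow_le {ι : Type*} (s : Finset ι) {f g : ι → ℝ}
    (hf : ∀ i ∈ s, 0 ≤ f i) (hg : ∀ i ∈ s, 0 ≤ g i) {a b : ℝ} (ha : 0 < a) (hb : 0 < b)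
    (hab : a + b = 1) :
    ∑ i ∈ s, f i ^ a * g i ^ b ≤ (∑ i ∈ s, f i) ^ a * (∑ i ∈ s, g i) ^ b := by
  have holder := inner_le_Lp_mul_Lq_of_nonneg s (holderConjugate_one_div ha hb hab)
    (fun i hi => rpow_nonneg (hf i hi) a) (fun i hi => rpow_nonneg (hg i hi) b)
  simp only [one_div, inv_inv] at holder
  convert holder using 3 <;> refine sum_congr rfl fun i hi => ?_
  · exact (rpow_rpow_inv (hf i hi) ha.ne').symm
  · exact (rpow_rpow_inv (hg i hi) hb.ne').symm

theorem convexOn_log_sum_mul_rpow {ι : Type*} [Fintype ι] [Nonempty ι] {P w : ι → ℝ}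
    (hP : ∀ i, 0 < P i) (hw : ∀ i, 0 < w i) :
    ConvexOn ℝ Set.univ (fun t : ℝ => log (∑ i, P i * w i ^ t)) := by
  have term_pos (i : ι) (t : ℝ) : 0 < P i * w i ^ t := mul_pos (hP i) (rpow_pos_of_pos (hw i) t)
  have sum_pos (t : ℝ) : 0 < ∑ i, P i * w i ^ t :=
    sum_pos (fun i _ => term_pos i t) univ_nonempty
  refine convexOn_iff_forall_pos.2 ⟨convex_univ, fun t₁ _ t₂ _ a b ha hb hab => ?_⟩
  have split (i : ι) : P i * w i ^ (a • t₁ + b • t₂)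
      = (P i * w i ^ t₁) ^ a * (P i * w i ^ t₂) ^ b := by
    have hPi := (hP i).le
    have hwi := (hw i).le
    rw [mul_rpow hPi (rpow_nonneg hwi _), mul_rpow hPi (rpow_nonneg hwi _), ← rpow_mul hwi,
      ← rpow_mul hwi, mul_mul_mul_comm, ← rpow_add (hP i), hab, rpow_one, ← rpow_add (hw i),
      smul_eq_mul, smul_eq_mul, mul_comm t₁, mul_comm t₂]
  calc log (∑ i, P i * w i ^ (a • t₁ + b • t₂))
      ≤ log ((∑ i, P i * w i ^ t₁) ^ a * (∑ i, P i * w i ^ t₂) ^ b) := by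
        refine log_le_log (sum_pos _) ?_
        simp only [split]
        exact sum_rpow_mul_rpow_le _ (fun i _ => (term_pos i t₁).le)
          (fun i _ => (term_pos i t₂).le) ha hb hab
    _ = a • log (∑ i, P i * w i ^ t₁) + b • log (∑ i, P i * w i ^ t₂) := by
        rw [log_mul (rpow_pos_of_pos (sum_pos t₁) a).ne' (rpow_pos_of_pos (sum_pos t₂) b).ne',
          log_rpow (sum_pos t₁), log_rpow (sum_pos t₂), smul_eq_mul, smul_eq_mul]

theorem ConvexOn.mul_comp_one_div {g : ℝ → ℝ} (hg : ConvexOn ℝ (Set.Ioi 0) g) :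
    ConvexOn ℝ (Set.Ioi 0) (fun l => l * g (1 / l)) := by
  refine convexOn_iff_forall_pos.2 ⟨convex_Ioi 0, fun l₁ hl₁ l₂ hl₂ a b ha hb hab => ?_⟩
  simp only [Set.mem_Ioi, smul_eq_mul] at hl₁ hl₂ ⊢
  set l := a * l₁ + b * l₂
  have hl : 0 < l := by positivity
  have weights : a * l₁ / l + b * l₂ / l = 1 := by field_simp; rfl
  have point : (a * l₁ / l) • (1 / l₁) + (b * l₂ / l) • (1 / l₂) = 1 / l := by
    simp only [smul_eq_mul]
    field_simp
    rw [hab]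
  have key := hg.2 (one_div_pos.2 hl₁) (one_div_pos.2 hl₂) (by positivity) (by positivity) weights
  rw [point, smul_eq_mul, smul_eq_mul] at key
  calc l * g (1 / l)
      ≤ l * (a * l₁ / l * g (1 / l₁) + b * l₂ / l * g (1 / l₂)) := by gcongr
    _ = a * (l₁ * g (1 / l₁)) + b * (l₂ * g (1 / l₂)) := by field_simp

theorem lambdaA_convex_general {X : Type*} [Fintype X] [Nonempty X]
    (P : X → ℝ) (hPpos : ∀ x, 0 < P x)
    (w : X → ℝ) (hw : ∀ x, 0 < w x) :
    ConvexOn ℝ (Set.Ioi (0 : ℝ))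
      (fun l : ℝ => l * Real.log (∑ x, P x * w x ^ (1 / l))) :=
  ((convexOn_log_sum_mul_rpow hPpos hw).subset (Set.subset_univ _)
    (convex_Ioi 0)).mul_comp_one_div

/-- The function `λ ↦ λ · log (Σ_x P(x) w(x)^{1/λ})` is convex on `(0,∞)`. -/
theorem lambdaA_convex {X : Type*} [Fintype X] [Nonempty X]
    (P : X → ℝ) (hPpos : ∀ x, 0 < P x) (hPsum : ∑ x, P x = 1)
    (w : X → ℝ) (hw : ∀ x, 0 < w x) :
    ConvexOn ℝ (Set.Ioi (0 : ℝ))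
      (fun l : ℝ => l * Real.log (∑ x, P x * w x ^ (1 / l))) :=
  lambdaA_convex_general P hPpos w hw
end

section
/- Gallager's E_0 function is concave: for a strictly positive probability mass function P on finite X and a strictly positive channel W : X × Y → (0,∞) with Σ_y W(y|x) = 1, the function E_0(ρ) = −log Σ_y ( Σ_x P(x) W(y|x)^{1/(1+ρ)} )^{1+ρ} is concave in ρ on [0, ∞). -/
/-!
Substitute `t = 1 + ρ`; it suffices that `F t = ∑_y (∑_x P(x) W(y|x)^{1/t})^t` is log-convex on
`t > 0`. Each summand is log-convex: for `t = a t₁ + b t₂`, Hölder with exponents `a t₁ / t`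
and `b t₂ / t` bounds the inner sum at `t` by a geometric mean of the inner sums at `t₁` and
`t₂`. A second application of Hölder (with exponents `a`, `b`) shows that sums of log-convex
functions are log-convex.
-/

open Real Finset

theorem sum_rpow_mul_rpow_le_of_add_eq_one {ι : Type*} (s : Finset ι) {u v : ι → ℝ}
    (hu : ∀ i ∈ s, 0 ≤ u i) (hv : ∀ i ∈ s, 0 ≤ v i) {a b : ℝ} (ha : 0 < a) (hb : 0 < b)
    (hab : a + b = 1) :
    ∑ i ∈ s, u i ^ a * v i ^ b ≤ (∑ i ∈ s, u i) ^ a * (∑ i ∈ s, v i) ^ b := by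
  have holder := inner_le_Lp_mul_Lq_of_nonneg s (.inv_inv ha hb hab)
    (f := fun i => u i ^ a) (g := fun i => v i ^ b)
    (fun i hi => rpow_nonneg (hu i hi) a) (fun i hi => rpow_nonneg (hv i hi) b)
  rwa [sum_congr rfl fun i hi => rpow_rpow_inv (hu i hi) ha.ne',
    sum_congr rfl fun i hi => rpow_rpow_inv (hv i hi) hb.ne', one_div, one_div, inv_inv,
    inv_inv] at holder

theorem convexOn_log_iff_le_rpow_mul_rpow {D : Set ℝ} {f : ℝ → ℝ} (hf : ∀ t ∈ D, 0 < f t) :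
    ConvexOn ℝ D (fun t => log (f t)) ↔ Convex ℝ D ∧ ∀ ⦃x⦄, x ∈ D → ∀ ⦃y⦄, y ∈ D →
      ∀ ⦃a b : ℝ⦄, 0 < a → 0 < b → a + b = 1 → f (a * x + b * y) ≤ f x ^ a * f y ^ b := by
  rw [convexOn_iff_forall_pos]
  refine and_congr_right fun hD => forall₂_congr fun x hx => forall₂_congr fun y hy =>
    forall₂_congr fun a b => forall₃_congr fun ha hb hab => ?_
  have hxy : a * x + b * y ∈ D := hD hx hy ha.le hb.le hab
  simp only [smul_eq_mul]
  rw [← log_rpow (hf x hx), ← log_rpow (hf y hy),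
    ← log_mul (rpow_pos_of_pos (hf x hx) a).ne' (rpow_pos_of_pos (hf y hy) b).ne',
    log_le_log_iff (hf _ hxy) (by have := hf x hx; have := hf y hy; positivity)]

theorem ConvexOn.log_sum {ι : Type*} {s : Finset ι} (hs : s.Nonempty) {D : Set ℝ}
    {f : ι → ℝ → ℝ} (hpos : ∀ i ∈ s, ∀ t ∈ D, 0 < f i t)
    (hf : ∀ i ∈ s, ConvexOn ℝ D fun t => log (f i t)) :
    ConvexOn ℝ D fun t => log (∑ i ∈ s, f i t) := by
  obtain ⟨i₀, hi₀⟩ := hs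
  refine (convexOn_log_iff_le_rpow_mul_rpow fun t ht => sum_pos (fun i hi => hpos i hi t ht)
    ⟨i₀, hi₀⟩).2 ⟨(hf i₀ hi₀).1, fun x hx y hy a b ha hb hab => ?_⟩
  calc ∑ i ∈ s, f i (a * x + b * y)
      ≤ ∑ i ∈ s, f i x ^ a * f i y ^ b := sum_le_sum fun i hi =>
        ((convexOn_log_iff_le_rpow_mul_rpow (hpos i hi)).1 (hf i hi)).2 hx hy ha hb hab
    _ ≤ (∑ i ∈ s, f i x) ^ a * (∑ i ∈ s, f i y) ^ b :=
        sum_rpow_mul_rpow_le_of_add_eq_one s (fun i hi => (hpos i hi x hx).le)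
          (fun i hi => (hpos i hi y hy).le) ha hb hab

theorem convexOn_log_sum_mul_rpow_one_div_rpow {ι : Type*} {s : Finset ι} (hs : s.Nonempty)
    {c w : ι → ℝ} (hc : ∀ i ∈ s, 0 < c i) (hw : ∀ i ∈ s, 0 < w i) :
    ConvexOn ℝ (Set.Ioi (0 : ℝ)) fun t => log ((∑ i ∈ s, c i * w i ^ (1 / t)) ^ t) := by
  set S : ℝ → ℝ := fun r => ∑ i ∈ s, c i * w i ^ (1 / r)
  have hS : ∀ r, 0 < S r := fun r =>
    sum_pos (fun i hi => mul_pos (hc i hi) (rpow_pos_of_pos (hw i hi) _)) hs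
  refine (convexOn_log_iff_le_rpow_mul_rpow fun t _ => rpow_pos_of_pos (hS t) t).2
    ⟨convex_Ioi 0, fun t₁ (ht₁ : 0 < t₁) t₂ (ht₂ : 0 < t₂) a b ha hb hab => ?_⟩
  set t := a * t₁ + b * t₂
  have ht : 0 < t := by positivity
  have hαβ : a * t₁ / t + b * t₂ / t = 1 := by rw [← add_div, div_self ht.ne']
  -- Hölder exponents `α = a t₁ / t`, `β = b t₂ / t`: they sum to `1` and `α / t₁ + β / t₂ = 1 / t`.
  have hsplit : ∀ i ∈ s, c i * w i ^ (1 / t) =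
      (c i * w i ^ (1 / t₁)) ^ (a * t₁ / t) * (c i * w i ^ (1 / t₂)) ^ (b * t₂ / t) := by
    intro i hi
    have hci := hc i hi
    have hwi := hw i hi
    rw [mul_rpow hci.le (rpow_nonneg hwi.le _), mul_rpow hci.le (rpow_nonneg hwi.le _),
      ← rpow_mul hwi.le, ← rpow_mul hwi.le, mul_mul_mul_comm, ← rpow_add hci, hαβ, rpow_one,
      ← rpow_add hwi]
    congr 2
    field_simp
    exact hab.symm
  have holder : S t ≤ S t₁ ^ (a * t₁ / t) * S t₂ ^ (b * t₂ / t) := by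
    rw [show S t = _ from sum_congr rfl hsplit]
    exact sum_rpow_mul_rpow_le_of_add_eq_one s
      (fun i hi => mul_nonneg (hc i hi).le (rpow_nonneg (hw i hi).le _))
      (fun i hi => mul_nonneg (hc i hi).le (rpow_nonneg (hw i hi).le _))
      (by positivity) (by positivity) hαβ
  calc S t ^ t ≤ (S t₁ ^ (a * t₁ / t) * S t₂ ^ (b * t₂ / t)) ^ t :=
        rpow_le_rpow (hS t).le holder ht.le
    _ = (S t₁ ^ t₁) ^ a * (S t₂ ^ t₂) ^ b := by
        rw [mul_rpow (rpow_nonneg (hS t₁).le _) (rpow_nonneg (hS t₂).le _),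
          ← rpow_mul (hS t₁).le, ← rpow_mul (hS t₂).le, ← rpow_mul (hS t₁).le,
          ← rpow_mul (hS t₂).le, div_mul_cancel₀ _ ht.ne', div_mul_cancel₀ _ ht.ne',
          mul_comm t₁, mul_comm t₂]

theorem E0_concave_general {X Y : Type*} [Fintype X] [Nonempty X] [Fintype Y] [Nonempty Y]
    (P : X → ℝ) (hPpos : ∀ x, 0 < P x)
    (W : X → Y → ℝ) (hWpos : ∀ x y, 0 < W x y) :
    ConcaveOn ℝ (Set.Ici (0 : ℝ))
      (fun ρ : ℝ =>
        -Real.log (∑ y, (∑ x, P x * W x y ^ (1 / (1 + ρ))) ^ (1 + ρ))) := by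
  have hinner : ∀ y (t : ℝ), 0 < ∑ x, P x * W x y ^ (1 / t) := fun y t =>
    sum_pos (fun x _ => mul_pos (hPpos x) (rpow_pos_of_pos (hWpos x y) _)) univ_nonempty
  have hlog : ConvexOn ℝ (Set.Ioi (0 : ℝ)) fun t =>
      log (∑ y, (∑ x, P x * W x y ^ (1 / t)) ^ t) :=
    .log_sum univ_nonempty (fun y _ t _ => rpow_pos_of_pos (hinner y t) t) fun y _ =>
      convexOn_log_sum_mul_rpow_one_div_rpow univ_nonempty (fun x _ => hPpos x)
        fun x _ => hWpos x y
  have hshift := (hlog.translate_right 1).subset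
    (fun ρ (hρ : 0 ≤ ρ) => show 0 < 1 + ρ by linarith) (convex_Ici 0)
  exact hshift.neg

/-- Gallager's `E₀` function is concave in `ρ` on `[0,∞)`. -/
theorem E0_concave {X Y : Type*} [Fintype X] [Nonempty X] [Fintype Y] [Nonempty Y]
    (P : X → ℝ) (hPpos : ∀ x, 0 < P x) (hPsum : ∑ x, P x = 1)
    (W : X → Y → ℝ) (hWpos : ∀ x y, 0 < W x y) (hWsum : ∀ x, ∑ y, W x y = 1) :
    ConcaveOn ℝ (Set.Ici (0 : ℝ))
      (fun ρ : ℝ =>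
        -Real.log (∑ y, (∑ x, P x * W x y ^ (1 / (1 + ρ))) ^ (1 + ρ))) :=
  E0_concave_general P hPpos W hWpos
end
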